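/- Let m be a positive integer and let H and K be distribution functions on ℝ, each with finite absolute moment of order m. Then, in the quotient ring ℝ[D]/(D^{m+1}), the m-th Laplace character of K ⋆ H satisfies L_{K⋆H,m} = ∑_{j=0}^m ((−1)^j/j!) μ_{H,j} · L_{K,m−j} · D^j, where L_{K,m−j} = ∑_{l=0}^{m−j} ((−1)^l/l!) μ_{K,l} D^l. -/

import Mathlib

open MeasureTheory Polynomial

noncomputable section

/-- The polynomial `∑_{k=0}^m ((-1)^k/k!) μ_k D^k` associated to a measure,
where `μ_k = ∫ x^k dμ` is the `k`-th moment. -/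
def laplaceCharPoly (m : ℕ) (μ : Measure ℝ) : Polynomial ℝ :=
  ∑ k ∈ Finset.range (m + 1),
    Polynomial.C ((-1 : ℝ) ^ k / k.factorial * ∫ x, x ^ k ∂μ) * Polynomial.X ^ k

/-- The `m`-th Laplace character of a measure, as an element of `ℝ[D]/(D^{m+1})`. -/
def laplaceChar (m : ℕ) (μ : Measure ℝ) :
    Polynomial ℝ ⧸ Ideal.span {(Polynomial.X : Polynomial ℝ) ^ (m + 1)} :=
  Ideal.Quotient.mk _ (laplaceCharPoly m μ)

/-- Convolution of two measures on `ℝ`: the law of the sum of independent random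
variables with the given laws. -/
def convMeasure (μ ν : Measure ℝ) : Measure ℝ :=
  Measure.map (fun p : ℝ × ℝ => p.1 + p.2) (μ.prod ν)

-- triangle reindex
lemma triangle_sum {M : Type*} [AddCommMonoid M] (m : ℕ) (f : ℕ → ℕ → M) :
    ∑ j ∈ Finset.range (m + 1), ∑ l ∈ Finset.range (m + 1 - j), f j l =
      ∑ n ∈ Finset.range (m + 1), ∑ j ∈ Finset.range (n + 1), f j (n - j) := by
  induction m with
  | zero => simp
  | succ m ih =>
    have h1 : ∑ j ∈ Finset.range (m + 2), ∑ l ∈ Finset.range (m + 2 - j), f j l =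
        ∑ j ∈ Finset.range (m + 2), ((∑ l ∈ Finset.range (m + 1 - j), f j l)
          + f j (m + 1 - j)) := by
      refine Finset.sum_congr rfl fun j hj => ?_
      have hj' : j ≤ m + 1 := Nat.lt_succ_iff.mp (Finset.mem_range.mp hj)
      have : m + 2 - j = (m + 1 - j) + 1 := by omega
      rw [this, Finset.sum_range_succ]
    rw [h1, Finset.sum_add_distrib, Finset.sum_range_succ (fun j => ∑ l ∈ Finset.range (m + 1 - j), f j l)]
    simp only [Nat.sub_self, Finset.range_zero, Finset.sum_empty, add_zero]
    rw [ih]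
    conv_rhs => rw [Finset.sum_range_succ]


lemma integrable_pow_of_le (m k : ℕ) (hk : k ≤ m) (μ : Measure ℝ) [IsProbabilityMeasure μ]
    (hμ : Integrable (fun x => |x| ^ m) μ) : Integrable (fun x : ℝ => x ^ k) μ := by
  refine Integrable.mono' ((integrable_const (1 : ℝ)).add hμ)
    (measurable_id.pow_const k).aestronglyMeasurable (ae_of_all _ fun x => ?_)
  simp only [Real.norm_eq_abs, Pi.add_apply, abs_pow]
  rcases le_or_gt |x| 1 with h | h
  · have : |x| ^ k ≤ 1 := pow_le_one₀ (abs_nonneg x) h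
    have h2 : (0:ℝ) ≤ |x| ^ m := pow_nonneg (abs_nonneg x) m
    calc |x| ^ k ≤ 1 := this
      _ ≤ 1 + |x| ^ m := by linarith
  · have : |x| ^ k ≤ |x| ^ m := pow_le_pow_right₀ h.le hk
    calc |x| ^ k ≤ |x| ^ m := this
      _ ≤ 1 + |x| ^ m := by linarith

lemma moment_conv (m n : ℕ) (hn : n ≤ m) (η κ : Measure ℝ)
    [IsProbabilityMeasure η] [IsProbabilityMeasure κ]
    (hη : Integrable (fun x => |x| ^ m) η) (hκ : Integrable (fun x => |x| ^ m) κ) :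
    ∫ x, x ^ n ∂(convMeasure κ η) =
      ∑ i ∈ Finset.range (n + 1),
        (∫ x, x ^ i ∂κ) * (∫ x, x ^ (n - i) ∂η) * (n.choose i : ℝ) := by
  rw [convMeasure, integral_map (by fun_prop) (by fun_prop)]
  have hexp : (fun p : ℝ × ℝ => (p.1 + p.2) ^ n) =
      fun p => ∑ i ∈ Finset.range (n + 1), p.1 ^ i * p.2 ^ (n - i) * (n.choose i : ℝ) := by
    funext p; rw [add_pow]
  rw [hexp]
  rw [integral_finset_sum]
  · refine Finset.sum_congr rfl fun i hi => ?_
    rw [integral_mul_const]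
    exact congrArg (· * ((n.choose i : ℝ)))
      (integral_prod_mul (μ := κ) (ν := η) (fun x : ℝ => x ^ i) fun y : ℝ => y ^ (n - i))
  · intro i hi
    have hi' : i ≤ n := Nat.lt_succ_iff.mp (Finset.mem_range.mp hi)
    exact ((integrable_pow_of_le m i (hi'.trans hn) κ hκ).mul_prod
      (integrable_pow_of_le m (n - i) ((Nat.sub_le n i).trans hn) η hη)).mul_const _

/-- If `H` and `K` (with laws `η`, `κ`) have finite absolute moment of
order `m ≥ 1`, then in `ℝ[D]/(D^{m+1})`,
`L_{K⋆H,m} = ∑_{j=0}^m ((-1)^j/j!) μ_{H,j} · L_{K,m-j} · D^j`. -/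
theorem laplaceChar_conv_binomial (m : ℕ) (hm : 0 < m)
    (η κ : Measure ℝ) [IsProbabilityMeasure η] [IsProbabilityMeasure κ]
    (hη : Integrable (fun x => |x| ^ m) η)
    (hκ : Integrable (fun x => |x| ^ m) κ) :
    laplaceChar m (convMeasure κ η) =
      Ideal.Quotient.mk (Ideal.span {(Polynomial.X : Polynomial ℝ) ^ (m + 1)})
        (∑ j ∈ Finset.range (m + 1),
          Polynomial.C ((-1 : ℝ) ^ j / j.factorial * ∫ x, x ^ j ∂η) *
            laplaceCharPoly (m - j) κ * Polynomial.X ^ j) := by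
  rw [laplaceChar]
  congr 1
  set a : ℕ → ℝ := fun j => (-1 : ℝ) ^ j / j.factorial * ∫ x, x ^ j ∂η with ha
  set b : ℕ → ℝ := fun l => (-1 : ℝ) ^ l / l.factorial * ∫ x, x ^ l ∂κ with hb
  have hRHS : ∑ j ∈ Finset.range (m + 1),
      Polynomial.C (a j) * laplaceCharPoly (m - j) κ * Polynomial.X ^ j =
      ∑ j ∈ Finset.range (m + 1), ∑ l ∈ Finset.range (m + 1 - j),
        Polynomial.C (a j * b l) * Polynomial.X ^ (j + l) := by
    refine Finset.sum_congr rfl fun j hj => ?_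
    have hj' : j ≤ m := Nat.lt_succ_iff.mp (Finset.mem_range.mp hj)
    have hrange : m - j + 1 = m + 1 - j := by omega
    rw [laplaceCharPoly, hrange, Finset.mul_sum, Finset.sum_mul]
    refine Finset.sum_congr rfl fun l hl => ?_
    simp only [ha, hb, map_mul, pow_add]
    ring
  rw [hRHS, triangle_sum]
  rw [laplaceCharPoly]
  refine Finset.sum_congr rfl fun n hn => ?_
  have hn' : n ≤ m := Nat.lt_succ_iff.mp (Finset.mem_range.mp hn)
  have hstep : ∑ j ∈ Finset.range (n + 1),
      Polynomial.C (a j * b (n - j)) * Polynomial.X ^ (j + (n - j)) =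
      Polynomial.C (∑ j ∈ Finset.range (n + 1), a j * b (n - j)) * Polynomial.X ^ n := by
    rw [map_sum, Finset.sum_mul]
    refine Finset.sum_congr rfl fun j hj => ?_
    have hj' : j ≤ n := Nat.lt_succ_iff.mp (Finset.mem_range.mp hj)
    rw [Nat.add_sub_cancel' hj']
  rw [hstep]
  congr 1
  refine congrArg _ ?_
  rw [moment_conv m n hn' η κ hη hκ, Finset.mul_sum]
  rw [← Finset.sum_range_reflect (fun i => (-1:ℝ)^n / n.factorial *
      ((∫ x, x ^ i ∂κ) * (∫ x, x ^ (n - i) ∂η) * (n.choose i : ℝ))) (n+1)]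
  simp only [Nat.add_sub_cancel]
  refine Finset.sum_congr rfl fun j hj => ?_
  have hj' : j ≤ n := Nat.lt_succ_iff.mp (Finset.mem_range.mp hj)
  have h1 : n - (n - j) = j := by omega
  have h2 : n.choose (n - j) = n.choose j := Nat.choose_symm hj'
  rw [h1, h2, ha, hb]
  have hfact : ((n.choose j : ℝ)) * j.factorial * (n - j).factorial = n.factorial := by
    exact_mod_cast Nat.choose_mul_factorial_mul_factorial hj'
  have hsign : (-1 : ℝ) ^ j * (-1 : ℝ) ^ (n - j) = (-1 : ℝ) ^ n := by
    rw [← pow_add, Nat.add_sub_cancel' hj']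
  have hj0 : (j.factorial : ℝ) ≠ 0 := Nat.cast_ne_zero.mpr j.factorial_ne_zero
  have hnj0 : ((n - j).factorial : ℝ) ≠ 0 := Nat.cast_ne_zero.mpr (n - j).factorial_ne_zero
  have hn0 : (n.factorial : ℝ) ≠ 0 := Nat.cast_ne_zero.mpr n.factorial_ne_zero
  field_simp
  linear_combination ((-1:ℝ) ^ n * (∫ x, x ^ (n - j) ∂κ) * (∫ x, x ^ j ∂η)) * hfact -
    ((∫ x, x ^ j ∂η) * (∫ x, x ^ (n - j) ∂κ) * (n.factorial : ℝ)) * hsign
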